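/- Let A, B ∈ ℂ with A(A+B) ≠ 0, let (0, a₄, a₅, θ) ∈ ℂ⁴ with a₄ ≠ 0 and a₅ ≠ 0, and let (a₃', a₄', a₅', θ') = S_{A,B}(0, a₄, a₅, θ). Then a₃' = 0, a₄' ≠ 0, a₅' ≠ 0, and a₄³(θ − a₅)/a₅³ = a₄'³(θ' − a₅')/a₅'³. -/
import Mathlib


noncomputable def S (A B : ℂ) (p : ℂ × ℂ × ℂ × ℂ) : ℂ × ℂ × ℂ × ℂ :=
  let a3 := p.1
  let a4 := p.2.1
  let a5 := p.2.2.1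
  let th := p.2.2.2
  let a3' := (A + B) * a3 / A ^ 2
  let a4' := ((A + B) * a4 - 2 * A * B * a3 * a3') / A ^ 3
  (a3', a4',
   ((A + B) * a5 - (2 * A * B * a4 + B ^ 2 * a3 ^ 2) * a3' - 3 * A ^ 2 * B * a3 * a4') / A ^ 4,
   (A * th + B * a5 - (2 * A * B * a4 + B ^ 2 * a3 ^ 2) * a3' - 3 * A ^ 2 * B * a3 * a4') / A ^ 4)

theorem S_U3_invariants (A B : ℂ) (h : A * (A + B) ≠ 0) (a₄ a₅ θ : ℂ)
    (h4 : a₄ ≠ 0) (h5 : a₅ ≠ 0)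
    (a₃' a₄' a₅' θ' : ℂ) (heq : (a₃', a₄', a₅', θ') = S A B (0, a₄, a₅, θ)) :
    a₃' = 0 ∧ a₄' ≠ 0 ∧ a₅' ≠ 0 ∧
    a₄ ^ 3 * (θ - a₅) / a₅ ^ 3 = a₄' ^ 3 * (θ' - a₅') / a₅' ^ 3 := by
  have hA : A ≠ 0 := fun hA => h (by simp [hA])
  have hAB : A + B ≠ 0 := fun hAB => h (by simp [hAB])
  simp only [S, Prod.mk.injEq] at heq
  obtain ⟨h3, h4', h5', hth⟩ := heq
  simp only [mul_zero, zero_div, zero_mul, sub_zero, mul_zero] at h3 h4' h5' hth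
  subst h3 h4' h5' hth
  refine ⟨rfl, div_ne_zero (mul_ne_zero hAB h4) (pow_ne_zero _ hA),
    div_ne_zero (mul_ne_zero hAB h5) (pow_ne_zero _ hA), ?_⟩
  field_simp
  ring
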